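/- Let p be a prime with p > 2 and let k be an algebraic closure of the finite field with p elements. There is no intermediate field K of the extension k(T)/k such that K is contained in both subfields k(T^p + T^{p-1}) and k(T^{p-1}) and k(T) is a finite-dimensional vector space over K. -/

import Mathlib

/-!
Let `ζ ≠ 1` be a `(p-1)`-st root of unity and `σ` the `k`-automorphism `T ↦ ζT` of `k(T)`.
It fixes `T^(p-1)`, hence every `h ∈ k(f) ∩ k(T^(p-1))`, where `f = T^p + T^(p-1)`.
Writing `h = r(f)/s(f)` in lowest terms, invariance forces `r(f)(ζT) = c · r(f)` and likewise
for `s`. No nonconstant `W` satisfies `W(f)(ζT) = c · W(f)`: if `W' = 0` then `W` is a `p`-th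
power and we descend; otherwise, as `f' = -T^(p-2)` and `ζ^(p-1) = 1`, `W'` satisfies the same
relation, so by induction `W'` is a nonzero constant, and then `W(f)` has nonzero coefficients
at `T^(p-1)` and `T^p`, which `σ` scales by the different factors `1` and `ζ`.
So `k(f) ∩ k(T^(p-1)) = k`, over which `k(T)` is infinite-dimensional.
-/

open Polynomial

theorem IsCoprime.associated_of_mul_eq_mul {R : Type*} [CommRing R] [IsDomain R]
    {a b a' b' : R} (hab : IsCoprime a b) (hab' : IsCoprime a' b') (h : a' * b = a * b') :
    Associated a a' :=
  associated_of_dvd_dvd (hab.dvd_of_dvd_mul_right ⟨b', h⟩)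
    (hab'.dvd_of_dvd_mul_right ⟨b, h.symm⟩)

theorem AlgHom.apply_eq_self_of_mem_adjoin_simple {K L : Type*} [Field K] [Field L]
    [Algebra K L] (σ : L →ₐ[K] L) {x h : L} (hx : σ x = x)
    (hh : h ∈ IntermediateField.adjoin K {x}) : σ h = h := by
  obtain ⟨r, s, rfl⟩ := (IntermediateField.mem_adjoin_simple_iff K h).1 hh
  rw [map_div₀, ← aeval_algHom_apply, ← aeval_algHom_apply, hx]

theorem IntermediateField.exists_isCoprime_eq_div_of_mem_adjoin_simple {K L : Type*} [Field K]
    [Field L] [Algebra K L] {x h : L} (hx : Transcendental K x)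
    (hh : h ∈ IntermediateField.adjoin K {x}) :
    ∃ r s : K[X], IsCoprime r s ∧ h = aeval x r / aeval x s := by
  set u := (RatFunc.algEquivOfTranscendental x hx).symm ⟨h, hh⟩
  refine ⟨u.num, u.denom, u.isCoprime_num_denom, ?_⟩
  rw [← RatFunc.algEquivOfTranscendental_apply x hx, AlgEquiv.apply_symm_apply]

namespace RatFunc

variable {K : Type*} [Field K]

theorem exists_algHom_X_eq {L : Type*} [Field L] [Algebra K L] {x : L}
    (hx : Transcendental K x) : ∃ σ : RatFunc K →ₐ[K] L, σ X = x :=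
  ⟨(IntermediateField.val _).comp (algEquivOfTranscendental x hx).toAlgHom, by simp⟩

theorem transcendental_algebraMap {P : K[X]} (hP : P.natDegree ≠ 0) :
    Transcendental K (algebraMap K[X] (RatFunc K) P) := by
  rw [← aeval_X_left_eq_algebraMap]
  exact transcendental_X.aeval P hP (mem_nonZeroDivisors_of_ne_zero
    (leadingCoeff_ne_zero.2 (ne_zero_of_natDegree_gt (Nat.pos_of_ne_zero hP))))

theorem algHom_algebraMap {σ : RatFunc K →ₐ[K] RatFunc K} {q : K[X]}
    (hσ : σ X = algebraMap K[X] (RatFunc K) q) (P : K[X]) :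
    σ (algebraMap K[X] (RatFunc K) P) = algebraMap K[X] (RatFunc K) (P.comp q) := by
  rw [← aeval_X_left_eq_algebraMap, ← aeval_algHom_apply, hσ, aeval_algebraMap_apply,
    comp_eq_aeval]

theorem ne_bot_of_finiteDimensional (E : IntermediateField K (RatFunc K))
    [FiniteDimensional E (RatFunc K)] : E ≠ ⊥ := by
  rintro rfl
  have : FiniteDimensional K (RatFunc K) :=
    Module.Finite.trans (⊥ : IntermediateField K (RatFunc K)) (RatFunc K)
  exact Algebra.transcendental_iff_not_isAlgebraic.1 (RatFunc.transcendental (K := K))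
    (Algebra.IsAlgebraic.of_finite K (RatFunc K))

end RatFunc

namespace Polynomial

theorem exists_eq_C_mul_of_associated {K : Type*} [Field K] {P Q : K[X]}
    (h : Associated P Q) : ∃ c : K, Q = C c * P := by
  obtain ⟨u, rfl⟩ := h
  obtain ⟨c, -, hc⟩ := Polynomial.isUnit_iff.1 u.isUnit
  exact ⟨c, by rw [hc, mul_comm]⟩

theorem pow_eq_of_comp_C_mul_X_eq_C_mul {R : Type*} [CommRing R] [IsDomain R] {P : R[X]}
    {ζ c : R} (h : P.comp (C ζ * X) = C c * P) {j : ℕ} (hj : P.coeff j ≠ 0) : ζ ^ j = c := by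
  have := congrArg (coeff · j) h
  simp only [comp_C_mul_X_coeff, coeff_C_mul] at this
  exact mul_left_cancel₀ hj (by rw [this, mul_comm])

theorem coeff_comp_X_pow_add_X_pow_sub_one {R : Type*} [CommRing R] {p : ℕ} (hp : 2 < p)
    (W : R[X]) {j : ℕ} (hj₁ : p - 1 ≤ j) (hj₂ : j ≤ p) :
    (W.comp (X ^ p + X ^ (p - 1))).coeff j = W.coeff 1 := by
  have hW : W = C (W.coeff 0) + X * (C (W.coeff 1) + X * divX (divX W)) := by
    rw [← coeff_divX, add_comm (C ((divX W).coeff 0)), X_mul_divX_add, add_comm, X_mul_divX_add]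
  generalize divX (divX W) = Q at hW
  have hf : (X ^ p + X ^ (p - 1) : R[X]) = X ^ (p - 1) * (X + 1) := by
    rw [mul_add, mul_one, ← pow_succ, Nat.sub_add_cancel (by omega)]
  have hcomp : W.comp (X ^ p + X ^ (p - 1)) =
      C (W.coeff 0) + C (W.coeff 1) * (X ^ p + X ^ (p - 1)) +
        X ^ (2 * (p - 1)) * ((X + 1) ^ 2 * Q.comp (X ^ p + X ^ (p - 1))) := by
    conv_lhs => rw [hW]
    simp only [add_comp, mul_comp, C_comp, X_comp]
    rw [hf]
    ring
  rw [hcomp, coeff_add, coeff_add, coeff_C, coeff_C_mul, coeff_X_pow_mul', coeff_add,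
    coeff_X_pow, coeff_X_pow]
  split_ifs <;> first | omega | simp

section CharP

variable {k : Type*} [Field k] (p : ℕ) [Fact p.Prime] [CharP k p]

theorem exists_pow_eq_of_derivative_eq_zero [PerfectRing k p] {W : k[X]}
    (hW : derivative W = 0) : ∃ V : k[X], V ^ p = W :=
  ⟨_, (polynomial_expand_eq (R := k) p _).symm.trans
    (expand_contract p hW (Fact.out : p.Prime).ne_zero)⟩

variable {p}

theorem comp_eq_C_mul_of_pow_comp_eq_C_mul [PerfectRing k p] {P q : k[X]} {c : k}
    (h : (P ^ p).comp q = C c * P ^ p) :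
    P.comp q = C ((frobeniusEquiv k p).symm c) * P := by
  apply frobenius_inj k[X] p
  rw [frobenius_def, frobenius_def, ← pow_comp, h, mul_pow, ← C_pow, frobeniusEquiv_symm_pow_p]

theorem derivative_X_pow_add_X_pow_sub_one :
    derivative (X ^ p + X ^ (p - 1) : k[X]) = -X ^ (p - 2) := by
  have hp := (Fact.out : p.Prime).two_le
  rw [derivative_add, derivative_X_pow, derivative_X_pow, CharP.cast_eq_zero,
    Nat.cast_sub (by omega), CharP.cast_eq_zero, show p - 1 - 1 = p - 2 by omega]
  simp

theorem derivative_comp_comp_C_mul_X_eq_C_mul {ζ c : k} (hζ : ζ ^ (p - 1) = 1) {W : k[X]}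
    (h : (W.comp (X ^ p + X ^ (p - 1))).comp (C ζ * X) = C c * W.comp (X ^ p + X ^ (p - 1))) :
    ((derivative W).comp (X ^ p + X ^ (p - 1))).comp (C ζ * X) =
      C c * (derivative W).comp (X ^ p + X ^ (p - 1)) := by
  have hp := (Fact.out : p.Prime).two_le
  have hζ' : C ζ * C (ζ ^ (p - 2)) = (1 : k[X]) := by
    rw [← C_mul, ← pow_succ', show p - 2 + 1 = p - 1 by omega, hζ, C_1]
  have hd := congrArg derivative h
  rw [derivative_C_mul, derivative_comp, derivative_comp, derivative_C_mul_X,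
    derivative_X_pow_add_X_pow_sub_one, mul_comp, neg_comp, X_pow_comp, mul_pow, ← C_pow] at hd
  refine mul_left_cancel₀ (neg_ne_zero.2 (pow_ne_zero (p - 2) (X_ne_zero (R := k)))) ?_
  linear_combination
    hd + X ^ (p - 2) * ((derivative W).comp (X ^ p + X ^ (p - 1))).comp (C ζ * X) * hζ'

theorem natDegree_eq_zero_of_comp_comp_C_mul_X_eq_C_mul [PerfectRing k p] (hp : 2 < p) {ζ : k}
    (hζ : ζ ^ (p - 1) = 1) (hζ₁ : ζ ≠ 1) {W : k[X]} {c : k}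
    (h : (W.comp (X ^ p + X ^ (p - 1))).comp (C ζ * X) = C c * W.comp (X ^ p + X ^ (p - 1))) :
    W.natDegree = 0 := by
  induction hn : W.natDegree using Nat.strong_induction_on generalizing W c with
  | _ n ih =>
  subst hn
  by_cases hW : derivative W = 0
  · obtain ⟨V, rfl⟩ := exists_pow_eq_of_derivative_eq_zero p hW
    rw [pow_comp] at h
    rw [natDegree_pow] at ih ⊢
    by_contra hV
    exact hV (by
      rw [ih V.natDegree (lt_mul_left (Nat.pos_of_ne_zero (by rintro h0; simp [h0] at hV))
        (by omega)) (comp_eq_C_mul_of_pow_comp_eq_C_mul h) rfl, mul_zero])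
  · exfalso
    have hW' : (derivative W).natDegree = 0 :=
      ih _ (natDegree_derivative_lt fun h0 ↦ hW (derivative_of_natDegree_zero h0))
        (derivative_comp_comp_C_mul_X_eq_C_mul hζ h) rfl
    have h1 : W.coeff 1 ≠ 0 := by
      intro h1
      apply hW
      rw [eq_C_of_natDegree_eq_zero hW', coeff_derivative, zero_add, h1, zero_mul, C_0]
    -- the substitution `X ↦ ζX` scales the coefficients at `X^(p-1)` and `X^p` differently
    have hc₁ := pow_eq_of_comp_C_mul_X_eq_C_mul h
      (j := p - 1) (by rwa [coeff_comp_X_pow_add_X_pow_sub_one hp W le_rfl (by omega)])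
    have hc₂ := pow_eq_of_comp_C_mul_X_eq_C_mul h
      (j := p) (by rwa [coeff_comp_X_pow_add_X_pow_sub_one hp W (by omega) le_rfl])
    rw [← Nat.sub_add_cancel (by omega : 1 ≤ p), pow_succ, hζ, one_mul, ← hc₁, hζ] at hc₂
    exact hζ₁ hc₂

end CharP

end Polynomial

section Intersection

variable {k : Type*} [Field k] {p : ℕ} [Fact p.Prime] [CharP k p]

theorem mem_bot_of_mem_adjoin_of_algHom_apply_eq [PerfectRing k p] (hp : 2 < p) {ζ : k}
    (hζ : ζ ^ (p - 1) = 1) (hζ₁ : ζ ≠ 1) {σ : RatFunc k →ₐ[k] RatFunc k}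
    (hσ : σ RatFunc.X = algebraMap k[X] (RatFunc k) (C ζ * X)) {h : RatFunc k}
    (hh : h ∈ IntermediateField.adjoin k {(RatFunc.X : RatFunc k) ^ p + RatFunc.X ^ (p - 1)})
    (hfix : σ h = h) : h ∈ (⊥ : IntermediateField k (RatFunc k)) := by
  by_cases h0 : h = 0
  · exact h0 ▸ zero_mem _
  set F : k[X] := X ^ p + X ^ (p - 1)
  have hF : F.natDegree ≠ 0 := by
    rw [natDegree_add_eq_left_of_natDegree_lt] <;> simp only [natDegree_X_pow] <;> omega
  rw [show (RatFunc.X : RatFunc k) ^ p + RatFunc.X ^ (p - 1) = algebraMap k[X] _ F by simp [F]]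
    at hh
  obtain ⟨r, s, hrs, rfl⟩ :=
    IntermediateField.exists_isCoprime_eq_div_of_mem_adjoin_simple
      (RatFunc.transcendental_algebraMap hF) hh
  simp only [aeval_algebraMap_apply, ← comp_eq_aeval] at h0 hfix ⊢
  rw [map_div₀, RatFunc.algHom_algebraMap hσ, RatFunc.algHom_algebraMap hσ] at hfix
  have hcross :
      (r.comp F).comp (C ζ * X) * s.comp F = r.comp F * (s.comp F).comp (C ζ * X) := by
    apply IsFractionRing.injective k[X] (RatFunc k)
    rw [map_mul, map_mul]
    refine (div_eq_div_iff ?_ ?_).1 hfix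
    · intro h'
      rw [h', div_zero] at hfix
      exact h0 hfix.symm
    · intro h'
      rw [h', div_zero] at h0
      exact h0 rfl
  have hcop : IsCoprime (r.comp F) (s.comp F) := hrs.map (compRingHom F)
  have hcop' : IsCoprime ((r.comp F).comp (C ζ * X)) ((s.comp F).comp (C ζ * X)) :=
    hcop.map (compRingHom (C ζ * X))
  obtain ⟨a, ha⟩ := exists_eq_C_mul_of_associated (hcop.associated_of_mul_eq_mul hcop' hcross)
  obtain ⟨b, hb⟩ := exists_eq_C_mul_of_associated
    (hcop.symm.associated_of_mul_eq_mul hcop'.symm (by linear_combination -hcross))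
  rw [eq_C_of_natDegree_eq_zero (natDegree_eq_zero_of_comp_comp_C_mul_X_eq_C_mul hp hζ hζ₁ ha),
    eq_C_of_natDegree_eq_zero (natDegree_eq_zero_of_comp_comp_C_mul_X_eq_C_mul hp hζ hζ₁ hb),
    C_comp, C_comp, ← algebraMap_eq, ← IsScalarTower.algebraMap_apply,
    ← IsScalarTower.algebraMap_apply]
  exact div_mem (algebraMap_mem _ _) (algebraMap_mem _ _)

theorem adjoin_inf_adjoin_eq_bot [IsAlgClosed k] (hp : 2 < p) :
    IntermediateField.adjoin k {(RatFunc.X : RatFunc k) ^ p + RatFunc.X ^ (p - 1)} ⊓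
      IntermediateField.adjoin k {(RatFunc.X : RatFunc k) ^ (p - 1)} = ⊥ := by
  have : NeZero ((p - 1 : ℕ) : k) :=
    ⟨by rw [Nat.cast_sub (by omega), CharP.cast_eq_zero, zero_sub, Nat.cast_one]; simp⟩
  obtain ⟨ζ, hζ⟩ := HasEnoughRootsOfUnity.exists_primitiveRoot k (p - 1)
  obtain ⟨σ, hσ⟩ := RatFunc.exists_algHom_X_eq (RatFunc.transcendental_algebraMap (K := k)
    (P := C ζ * X) (by rw [natDegree_C_mul_X ζ (hζ.ne_zero (by omega))]; exact one_ne_zero))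
  have hσg : σ (RatFunc.X ^ (p - 1)) = RatFunc.X ^ (p - 1) := by
    rw [map_pow, hσ, ← map_pow, mul_pow, ← C_pow, hζ.pow_eq_one, C_1, one_mul, map_pow,
      RatFunc.algebraMap_X]
  rw [eq_bot_iff]
  rintro h ⟨hf, hg⟩
  exact mem_bot_of_mem_adjoin_of_algHom_apply_eq hp hζ.pow_eq_one (hζ.ne_one (by omega)) hσ hf
    (σ.apply_eq_self_of_mem_adjoin_simple hσg hg)

end Intersection

/-- The "in particular" clause of Lemma 5.2: there is no intermediate field `K` of
`k(T)/k` contained in both `k(T^p + T^(p-1))` and `k(T^(p-1))` with `k(T)` finite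
over `K`. -/
theorem stmt_9 (p : ℕ) [Fact p.Prime] (hp2 : 2 < p) :
    ¬ ∃ K : IntermediateField (AlgebraicClosure (ZMod p))
        (RatFunc (AlgebraicClosure (ZMod p))),
      K ≤ IntermediateField.adjoin (AlgebraicClosure (ZMod p))
          {(RatFunc.X : RatFunc (AlgebraicClosure (ZMod p))) ^ p + RatFunc.X ^ (p - 1)} ∧
      K ≤ IntermediateField.adjoin (AlgebraicClosure (ZMod p))
          {(RatFunc.X : RatFunc (AlgebraicClosure (ZMod p))) ^ (p - 1)} ∧
      FiniteDimensional K (RatFunc (AlgebraicClosure (ZMod p))) := by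
  rintro ⟨K, hf, hg, hfin⟩
  have hK : K ≤ ⊥ := adjoin_inf_adjoin_eq_bot (k := AlgebraicClosure (ZMod p)) hp2 ▸ le_inf hf hg
  exact RatFunc.ne_bot_of_finiteDimensional K (le_bot_iff.1 hK)
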